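/- Suppose there exists a real m×n matrix X₀ with rank(X₀) ≤ k and 𝒜(X₀) = b, where 𝒜 : ℝ^{m×n} → ℝ^p is linear and b ≠ 0. Then X₀ minimizes the function X ↦ ‖X‖_{k,2}^⋆ − ‖X‖_F over the set { X : 𝒜(X) = b }. -/

import Mathlib

open Matrix

theorem Matrix.isHermitian_transpose_mul_self {m n : Type*} [Fintype m]
    (A : Matrix m n ℝ) : (Aᵀ * A).IsHermitian := by
  simpa [Matrix.conjTranspose_eq_transpose_of_trivial] using
    Matrix.isHermitian_conjTranspose_mul_self A

/-- Singular values of a real `m × n` matrix, sorted in decreasing order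
(indexed by `Fin n`; `σ i = sqrt` of the `i`-th largest eigenvalue of `Aᵀ * A`). -/
noncomputable def svalsDesc {m n : ℕ} (A : Matrix (Fin m) (Fin n) ℝ) : Fin n → ℝ :=
  fun i =>
    Real.sqrt
      (((Matrix.isHermitian_transpose_mul_self A).eigenvalues ∘
        Tuple.sort (Matrix.isHermitian_transpose_mul_self A).eigenvalues) i.rev)

/-- Ky Fan 2-k-norm: `(∑_{i=1}^k σ_i(A)²)^{1/2}`. -/
noncomputable def kyFan2 {m n : ℕ} (k : ℕ) (A : Matrix (Fin m) (Fin n) ℝ) : ℝ :=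
  Real.sqrt (∑ i ∈ Finset.univ.filter (fun i : Fin n => (i : ℕ) < k), (svalsDesc A i) ^ 2)

/-- Frobenius inner product `⟨A, B⟩ = trace (Aᵀ B)`. -/
noncomputable def frobInner {m n : ℕ} (A B : Matrix (Fin m) (Fin n) ℝ) : ℝ :=
  ∑ i, ∑ j, A i j * B i j

/-- Frobenius norm. -/
noncomputable def frobNorm {m n : ℕ} (A : Matrix (Fin m) (Fin n) ℝ) : ℝ :=
  Real.sqrt (∑ i, ∑ j, (A i j) ^ 2)

/-- Dual Ky Fan 2-k-norm `‖A‖_{k,2}^⋆ = max {⟨A,X⟩ : ‖X‖_{k,2} ≤ 1}`. -/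
noncomputable def kyFan2Dual {m n : ℕ} (k : ℕ) (A : Matrix (Fin m) (Fin n) ℝ) : ℝ :=
  sSup {c : ℝ | ∃ X : Matrix (Fin m) (Fin n) ℝ, kyFan2 k X ≤ 1 ∧ c = frobInner A X}

/-- The linear map `𝒜` satisfies the restricted isometry inequality with constant `δ`
for all matrices of rank at most `r`. -/
def HasRIP {m n p : ℕ} (𝒜 : Matrix (Fin m) (Fin n) ℝ →ₗ[ℝ] EuclideanSpace ℝ (Fin p))
    (r : ℕ) (δ : ℝ) : Prop :=
  ∀ X : Matrix (Fin m) (Fin n) ℝ, X.rank ≤ r →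
    (1 - δ) * frobNorm X ≤ ‖𝒜 X‖ ∧ ‖𝒜 X‖ ≤ (1 + δ) * frobNorm X

/-!
The objective `‖X‖_{k,2}^⋆ - ‖X‖_F` is nonnegative everywhere and vanishes at `X₀`.
Testing the dual norm against `X / ‖X‖_F` and using `‖·‖_{k,2} ≤ ‖·‖_F` gives `‖X‖_F ≤ ‖X‖_{k,2}^⋆`.
Conversely, if `P` is the orthogonal projection onto the row space of `X₀` (of dimension `≤ k`),
then `⟨X₀, X⟩ = ⟨X₀, XP⟩ ≤ ‖X₀‖_F ‖XP‖_F`, and `‖XP‖_F ≤ ‖X‖_{k,2}` by Ky Fan's maximum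
principle: for orthonormal `v₁, …, v_r` with `r ≤ k`, `∑ ‖X vₛ‖²` is at most the sum of the
`k` largest eigenvalues of `XᵀX`.
-/

open Finset
open scoped InnerProductSpace RealInnerProductSpace

theorem sum_mul_le_sum_filter_lt_of_antitone {n k : ℕ} {ν c : Fin n → ℝ} (hν : Antitone ν)
    (hν₀ : ∀ i, 0 ≤ ν i) (hc₀ : ∀ i, 0 ≤ c i) (hc₁ : ∀ i, c i ≤ 1) (hc : ∑ i, c i ≤ k) :
    ∑ i, ν i * c i ≤ ∑ i with i.val < k, ν i := by
  set S : Finset (Fin n) := {i | i.val < k}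
  rcases le_or_gt n k with hnk | hkn
  · have hS : S = univ := filter_true_of_mem fun i _ => i.2.trans_le hnk
    rw [hS]
    exact sum_le_sum fun i _ => mul_le_of_le_one_right (hν₀ i) (hc₁ i)
  -- compare with the `k`-th value `t`: `ν ≥ t` on `S`, `ν ≤ t` off `S`, and `∑ c ≤ k = #S`
  set t := ν ⟨k, hkn⟩
  have hS : #S = k := by
    have : S = Iio ⟨k, hkn⟩ := by ext i; simp [S, Fin.lt_def]
    rw [this, Fin.card_Iio]
  have hin : ∑ i ∈ S, (ν i * c i - ν i) ≤ ∑ i ∈ S, t * (c i - 1) :=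
    sum_le_sum fun i hi => by
      have : t ≤ ν i := hν (Fin.le_def.mpr (mem_filter.mp hi).2.le)
      nlinarith [hc₁ i]
  have hout : ∑ i ∈ Sᶜ, ν i * c i ≤ ∑ i ∈ Sᶜ, t * c i :=
    sum_le_sum fun i hi => by
      have : ν i ≤ t := hν (Fin.le_def.mpr (by simpa [S] using hi))
      nlinarith [hc₀ i]
  rw [← sum_add_sum_compl S] at hc ⊢
  rw [sum_sub_distrib, ← mul_sum, sum_sub_distrib, sum_const, hS, nsmul_one] at hin
  rw [← mul_sum] at hout
  nlinarith [hν₀ ⟨k, hkn⟩]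

theorem sum_inner_le_sqrt_mul_sqrt {ι E : Type*} [NormedAddCommGroup E] [InnerProductSpace ℝ E]
    (s : Finset ι) (x y : ι → E) :
    ∑ i ∈ s, ⟪x i, y i⟫ ≤ √(∑ i ∈ s, ‖x i‖ ^ 2) * √(∑ i ∈ s, ‖y i‖ ^ 2) :=
  (sum_le_sum fun i _ => real_inner_le_norm (x i) (y i)).trans
    (Real.sum_mul_le_sqrt_mul_sqrt s _ _)

section Frobenius

variable {m n : ℕ}

theorem frobInner_eq_sum_inner (A B : Matrix (Fin m) (Fin n) ℝ) :
    frobInner A B = ∑ i, ⟪WithLp.toLp 2 (A i), WithLp.toLp 2 (B i)⟫ := by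
  simp [frobInner, EuclideanSpace.inner_toLp_toLp, dotProduct, mul_comm]

theorem frobNorm_eq_sqrt_sum_norm_sq (A : Matrix (Fin m) (Fin n) ℝ) :
    frobNorm A = √(∑ i, ‖WithLp.toLp 2 (A i)‖ ^ 2) := by
  simp [frobNorm, EuclideanSpace.real_norm_sq_eq]

theorem frobNorm_nonneg (A : Matrix (Fin m) (Fin n) ℝ) : 0 ≤ frobNorm A :=
  Real.sqrt_nonneg _

theorem frobInner_le_frobNorm_mul_frobNorm (A B : Matrix (Fin m) (Fin n) ℝ) :
    frobInner A B ≤ frobNorm A * frobNorm B := by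
  rw [frobInner_eq_sum_inner, frobNorm_eq_sqrt_sum_norm_sq, frobNorm_eq_sqrt_sum_norm_sq]
  exact sum_inner_le_sqrt_mul_sqrt _ _ _

theorem frobInner_self (A : Matrix (Fin m) (Fin n) ℝ) : frobInner A A = frobNorm A ^ 2 := by
  rw [frobNorm, Real.sq_sqrt (by positivity), frobInner]
  simp only [sq]

theorem frobInner_smul_right (c : ℝ) (A B : Matrix (Fin m) (Fin n) ℝ) :
    frobInner A (c • B) = c * frobInner A B := by
  simp only [frobInner, Matrix.smul_apply, smul_eq_mul, mul_sum]
  exact sum_congr rfl fun i _ => sum_congr rfl fun j _ => by ring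

theorem frobNorm_smul (c : ℝ) (A : Matrix (Fin m) (Fin n) ℝ) :
    frobNorm (c • A) = |c| * frobNorm A := by
  simp only [frobNorm, Matrix.smul_apply, smul_eq_mul, mul_pow, ← mul_sum]
  rw [Real.sqrt_mul (sq_nonneg c), Real.sqrt_sq_eq_abs]

end Frobenius

section SingularValues

variable {m n : ℕ} (X : Matrix (Fin m) (Fin n) ℝ)

theorem sum_sq_mulVec_eq_sum_eigenvalues_mul_sq_inner (w : EuclideanSpace ℝ (Fin n)) :
    ∑ i, (X *ᵥ ⇑w) i ^ 2 =
      ∑ j, (isHermitian_transpose_mul_self X).eigenvalues j *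
        ⟪(isHermitian_transpose_mul_self X).eigenvectorBasis j, w⟫ ^ 2 := by
  set hX := isHermitian_transpose_mul_self X
  set u := hX.eigenvectorBasis
  have hquad : ∑ i, (X *ᵥ ⇑w) i ^ 2 = ⟪w, WithLp.toLp 2 ((Xᵀ * X) *ᵥ ⇑w)⟫ := by
    rw [EuclideanSpace.inner_eq_star_dotProduct, star_trivial, ← mulVec_mulVec, dotProduct_comm,
      dotProduct_mulVec, ← transpose_transpose X, vecMul_transpose, transpose_transpose]
    simp [dotProduct, sq]
  have heig : ∀ j, ⟪u j, WithLp.toLp 2 ((Xᵀ * X) *ᵥ ⇑w)⟫ = hX.eigenvalues j * ⟪u j, w⟫ := by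
    intro j
    have hsymm : (Xᵀ * X)ᵀ = Xᵀ * X := by rw [transpose_mul, transpose_transpose]
    simp only [EuclideanSpace.inner_eq_star_dotProduct, star_trivial]
    rw [dotProduct_comm, dotProduct_mulVec, ← mulVec_transpose, hsymm,
      hX.mulVec_eigenvectorBasis, smul_dotProduct, smul_eq_mul, dotProduct_comm]
  rw [hquad, ← u.sum_inner_mul_inner]
  refine sum_congr rfl fun j _ => ?_
  rw [heig, real_inner_comm]
  ring

theorem sum_eigenvalues_transpose_mul_self :
    ∑ j, (isHermitian_transpose_mul_self X).eigenvalues j = frobNorm X ^ 2 := by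
  have htrace : (Xᵀ * X).trace = ∑ j, (isHermitian_transpose_mul_self X).eigenvalues j := by
    simpa using (isHermitian_transpose_mul_self X).trace_eq_sum_eigenvalues
  rw [← htrace, ← frobInner_self]
  simp [trace, frobInner, mul_apply, sum_comm (γ := Fin m)]

noncomputable def svalsPerm : Equiv.Perm (Fin n) :=
  Fin.revPerm.trans (Tuple.sort (isHermitian_transpose_mul_self X).eigenvalues)

theorem sq_svalsDesc (i : Fin n) :
    svalsDesc X i ^ 2 = (isHermitian_transpose_mul_self X).eigenvalues (svalsPerm X i) :=
  Real.sq_sqrt ((posSemidef_conjTranspose_mul_self X).eigenvalues_nonneg _)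

theorem antitone_sq_svalsDesc : Antitone fun i => svalsDesc X i ^ 2 := fun _ _ hij => by
  simp only [sq_svalsDesc]
  exact Tuple.monotone_sort (isHermitian_transpose_mul_self X).eigenvalues
    (Fin.rev_le_rev.mpr hij)

theorem sum_sq_svalsDesc : ∑ i, svalsDesc X i ^ 2 = frobNorm X ^ 2 := by
  simp only [sq_svalsDesc]
  rw [Equiv.sum_comp, sum_eigenvalues_transpose_mul_self]

theorem sq_kyFan2 (k : ℕ) : kyFan2 k X ^ 2 = ∑ i with i.val < k, svalsDesc X i ^ 2 :=
  Real.sq_sqrt (by positivity)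

theorem kyFan2_nonneg (k : ℕ) : 0 ≤ kyFan2 k X :=
  Real.sqrt_nonneg _

theorem kyFan2_le_frobNorm (k : ℕ) : kyFan2 k X ≤ frobNorm X := by
  rw [kyFan2, ← Real.sqrt_sq (frobNorm_nonneg X), ← sum_sq_svalsDesc]
  exact Real.sqrt_le_sqrt
    (sum_le_sum_of_subset_of_nonneg (filter_subset _ _) fun i _ _ => sq_nonneg _)

theorem sq_svalsDesc_le_sq_kyFan2 {k : ℕ} (hk : 1 ≤ k) (i : Fin n) :
    svalsDesc X i ^ 2 ≤ kyFan2 k X ^ 2 := by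
  have h₀ : (⟨0, i.pos⟩ : Fin n) ∈ univ.filter fun i : Fin n => i.val < k := by simp; omega
  calc svalsDesc X i ^ 2 ≤ svalsDesc X ⟨0, i.pos⟩ ^ 2 :=
        antitone_sq_svalsDesc X (Fin.le_iff_val_le_val.mpr (Nat.zero_le _))
    _ ≤ kyFan2 k X ^ 2 := by
      rw [sq_kyFan2]
      exact single_le_sum (fun i _ => sq_nonneg (svalsDesc X i)) h₀

theorem frobNorm_le_sqrt_mul_kyFan2 {k : ℕ} (hk : 1 ≤ k) : frobNorm X ≤ √n * kyFan2 k X := by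
  rw [← Real.sqrt_sq (frobNorm_nonneg X), ← Real.sqrt_sq (kyFan2_nonneg X k),
    ← Real.sqrt_mul n.cast_nonneg, ← sum_sq_svalsDesc]
  refine Real.sqrt_le_sqrt ((sum_le_sum fun i _ => sq_svalsDesc_le_sq_kyFan2 X hk i).trans ?_)
  simp

theorem sum_sum_sq_mulVec_le_sq_kyFan2 {k r : ℕ} (hr : r ≤ k)
    {v : Fin r → EuclideanSpace ℝ (Fin n)} (hv : Orthonormal ℝ v) :
    ∑ s, ∑ i, (X *ᵥ ⇑(v s)) i ^ 2 ≤ kyFan2 k X ^ 2 := by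
  set u := (isHermitian_transpose_mul_self X).eigenvectorBasis
  -- `c j` is the weight of the eigenvector `u j` on `span v`:
  -- Bessel gives `c j ≤ 1` and Parseval gives `∑ c = r`
  set c : Fin n → ℝ := fun j => ∑ s, ⟪u j, v s⟫ ^ 2
  have hc₁ : ∀ j, c j ≤ 1 := fun j => by
    simpa [c, real_inner_comm] using hv.sum_inner_products_le (u j) (s := univ)
  have hc : ∑ j, c j = r := by
    simp [c, sum_comm (γ := Fin n), u.sum_sq_inner_right, hv.1]
  have hlhs : ∑ s, ∑ i, (X *ᵥ ⇑(v s)) i ^ 2 = ∑ i, svalsDesc X i ^ 2 * c (svalsPerm X i) := by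
    simp only [sum_sq_mulVec_eq_sum_eigenvalues_mul_sq_inner, sq_svalsDesc, c, mul_sum]
    rw [sum_comm]
    exact (Equiv.sum_comp (svalsPerm X) _).symm
  rw [hlhs, sq_kyFan2]
  refine sum_mul_le_sum_filter_lt_of_antitone (antitone_sq_svalsDesc X) (fun i => sq_nonneg _)
    (fun i => sum_nonneg fun s _ => sq_nonneg _) (fun i => hc₁ _) ?_
  rw [Equiv.sum_comp (svalsPerm X) c, hc]
  exact_mod_cast hr

end SingularValues

theorem finrank_span_range_toLp_eq_rank {m n : ℕ} (A : Matrix (Fin m) (Fin n) ℝ) :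
    Module.finrank ℝ (Submodule.span ℝ (Set.range fun i => WithLp.toLp 2 (A i))) = A.rank := by
  rw [rank_eq_finrank_span_row,
    ← LinearEquiv.finrank_map_eq (WithLp.linearEquiv 2 ℝ (Fin n → ℝ)).symm,
    ← Submodule.span_image, ← Set.range_comp]
  rfl

theorem frobInner_le_frobNorm_mul_kyFan2_of_rank_le {m n k : ℕ} {X₀ : Matrix (Fin m) (Fin n) ℝ}
    (hr : X₀.rank ≤ k) (X : Matrix (Fin m) (Fin n) ℝ) :
    frobInner X₀ X ≤ frobNorm X₀ * kyFan2 k X := by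
  set K := Submodule.span ℝ (Set.range fun i => WithLp.toLp 2 (X₀ i))
  set b := stdOrthonormalBasis ℝ K
  set a : Fin m → K := fun i => ⟨WithLp.toLp 2 (X₀ i), Submodule.subset_span ⟨i, rfl⟩⟩
  set y : Fin m → K := fun i => K.orthogonalProjectionOnto (WithLp.toLp 2 (X i))
  have hinner : frobInner X₀ X = ∑ i, ⟪a i, y i⟫ := by
    simp [frobInner_eq_sum_inner, a, y]
  have hy : ∑ i, ‖y i‖ ^ 2 = ∑ s, ∑ i, (X *ᵥ ⇑(b s : EuclideanSpace ℝ (Fin n))) i ^ 2 := by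
    simp only [y, ← b.sum_sq_inner_right, Submodule.inner_orthogonalProjectionOnto_eq_of_mem_left]
    rw [sum_comm]
    simp [EuclideanSpace.inner_eq_star_dotProduct, mulVec, dotProduct]
  have ha : √(∑ i, ‖a i‖ ^ 2) = frobNorm X₀ := by simp [a, frobNorm_eq_sqrt_sum_norm_sq]
  have hK : Module.finrank ℝ K ≤ k := (finrank_span_range_toLp_eq_rank X₀).trans_le hr
  calc frobInner X₀ X = ∑ i, ⟪a i, y i⟫ := hinner
    _ ≤ √(∑ i, ‖a i‖ ^ 2) * √(∑ i, ‖y i‖ ^ 2) := sum_inner_le_sqrt_mul_sqrt _ _ _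
    _ ≤ frobNorm X₀ * kyFan2 k X := by
      rw [ha, hy]
      refine mul_le_mul_of_nonneg_left (Real.sqrt_le_iff.mpr ⟨kyFan2_nonneg X k, ?_⟩)
        (frobNorm_nonneg X₀)
      exact sum_sum_sq_mulVec_le_sq_kyFan2 X hK (b.orthonormal.comp_linearIsometry K.subtypeₗᵢ)

section Dual

variable {m n k : ℕ}

theorem bddAbove_kyFan2Dual_set (hk : 1 ≤ k) (A : Matrix (Fin m) (Fin n) ℝ) :
    BddAbove {c : ℝ | ∃ X : Matrix (Fin m) (Fin n) ℝ, kyFan2 k X ≤ 1 ∧ c = frobInner A X} := by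
  refine ⟨frobNorm A * √n, ?_⟩
  rintro _ ⟨X, hX, rfl⟩
  have hXn : frobNorm X ≤ √n :=
    (frobNorm_le_sqrt_mul_kyFan2 X hk).trans (mul_le_of_le_one_right (Real.sqrt_nonneg _) hX)
  exact (frobInner_le_frobNorm_mul_frobNorm A X).trans
    (mul_le_mul_of_nonneg_left hXn (frobNorm_nonneg A))

theorem frobNorm_le_kyFan2Dual (hk : 1 ≤ k) (A : Matrix (Fin m) (Fin n) ℝ) :
    frobNorm A ≤ kyFan2Dual k A := by
  -- test against `A / ‖A‖_F` (which is `0` when `A = 0`)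
  refine le_csSup (bddAbove_kyFan2Dual_set hk A) ⟨(frobNorm A)⁻¹ • A, ?_, ?_⟩
  · calc kyFan2 k ((frobNorm A)⁻¹ • A) ≤ frobNorm ((frobNorm A)⁻¹ • A) :=
          kyFan2_le_frobNorm _ k
      _ = (frobNorm A)⁻¹ * frobNorm A := by
        rw [frobNorm_smul, abs_of_nonneg (inv_nonneg.mpr (frobNorm_nonneg A))]
      _ ≤ 1 := inv_mul_le_one
  · rw [frobInner_smul_right, frobInner_self, sq, ← mul_assoc, inv_mul_mul_self]

theorem kyFan2Dual_le_frobNorm_of_rank_le {A : Matrix (Fin m) (Fin n) ℝ} (hr : A.rank ≤ k) :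
    kyFan2Dual k A ≤ frobNorm A := by
  have hzero : kyFan2 k (0 : Matrix (Fin m) (Fin n) ℝ) ≤ 1 :=
    (kyFan2_le_frobNorm 0 k).trans (by simp [frobNorm])
  refine csSup_le ⟨0, 0, hzero, by simp [frobInner]⟩ ?_
  rintro _ ⟨X, hX, rfl⟩
  exact (frobInner_le_frobNorm_mul_kyFan2_of_rank_le hr X).trans
    (mul_le_of_le_one_right (frobNorm_nonneg A) hX)

end Dual

theorem lowrank_minimizes_diff_general {m n p k : ℕ} (hk1 : 1 ≤ k)
    (𝒜 : Matrix (Fin m) (Fin n) ℝ →ₗ[ℝ] EuclideanSpace ℝ (Fin p))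
    (b : EuclideanSpace ℝ (Fin p))
    (X₀ : Matrix (Fin m) (Fin n) ℝ) (hr : X₀.rank ≤ k) :
    ∀ X : Matrix (Fin m) (Fin n) ℝ, 𝒜 X = b →
      kyFan2Dual k X₀ - frobNorm X₀ ≤ kyFan2Dual k X - frobNorm X := by
  intro X _
  have h₀ := kyFan2Dual_le_frobNorm_of_rank_le hr
  have h := frobNorm_le_kyFan2Dual hk1 X
  linarith

/-- a feasible matrix of rank ≤ k minimizes `‖X‖_{k,2}^⋆ − ‖X‖_F`
over `{X : 𝒜 X = b}`. -/
theorem lowrank_minimizes_diff {m n p k : ℕ} (hk1 : 1 ≤ k) (hk : k ≤ min m n)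
    (𝒜 : Matrix (Fin m) (Fin n) ℝ →ₗ[ℝ] EuclideanSpace ℝ (Fin p))
    (b : EuclideanSpace ℝ (Fin p)) (hb : b ≠ 0)
    (X₀ : Matrix (Fin m) (Fin n) ℝ) (hr : X₀.rank ≤ k) (hA : 𝒜 X₀ = b) :
    ∀ X : Matrix (Fin m) (Fin n) ℝ, 𝒜 X = b →
      kyFan2Dual k X₀ - frobNorm X₀ ≤ kyFan2Dual k X - frobNorm X :=
  lowrank_minimizes_diff_general hk1 𝒜 b X₀ hr
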